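/- arXiv:1812.09394 — 4 statements merged into one kernel-verified Lean document; each statement's English description precedes it below -/
import Mathlib

section
/- Let K be a number field and p a prime number unramified in K, and let ζ ∈ ℂ be a primitive p-th root of unity and F = K(ζ). Then the extension F/K has degree p−1, and every prime ideal of O_K lying above p is totally ramified in F/K (its ramification index in F/K equals p−1). -/
open NumberField

/-- A prime number `p` is unramified in the number field `K` if no prime ideal of `𝓞 K`
lying above `p` is ramified over `ℚ`, i.e. every prime of `𝓞 K` containing `p` has
ramification index `1` over `pℤ`. -/
def IsUnramifiedIn (K : Type*) [Field K] (p : ℕ) : Prop :=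
  ∀ P : Ideal (𝓞 K), P.IsPrime → (p : 𝓞 K) ∈ P →
    Ideal.ramificationIdx' (Ideal.span {(p : ℤ)}) P = 1

/-!
The bound `e(Q | P) ≤ [F : K] ≤ p - 1` holds for any primes `Q | P` of `F / K`. Conversely,
`(p) = (ζ - 1) ^ (p - 1)` as ideals of `𝓞 F`, so every prime `Q` of `𝓞 F` above `p` contains
`ζ - 1` and has `e(Q | p) ≥ p - 1`; since `p` is unramified in `K`, multiplicativity of
ramification indices in `ℤ ⊆ 𝓞 K ⊆ 𝓞 F` gives `e(Q | P) = e(Q | p)`. Applied to one such pair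
`Q | P`, which exists by going-up, this forces `[F : K] = p - 1`, and then `e(Q | P) = p - 1`
for all of them.
-/

open Module IntermediateField

theorem Ideal.le_ramificationIdx'_of_map_le_pow {R S : Type*} [CommRing R] [CommRing S]
    [Algebra R S] [IsDedekindDomain S] {p : Ideal R} {P : Ideal S} [hP : P.IsPrime]
    (hp : map (algebraMap R S) p ≠ ⊥) {n : ℕ} (h : map (algebraMap R S) p ≤ P ^ n) :
    n ≤ ramificationIdx' p P := by
  rw [IsDedekindDomain.ramificationIdx'_eq_multiplicity hp hP]
  refine (FiniteMultiplicity.of_not_isUnit ?_ hp).le_multiplicity_of_pow_dvd (dvd_iff_le.mpr h)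
  rw [isUnit_iff]
  exact hP.ne_top

theorem NumberField.ramificationIdx'_le_finrank {K L : Type*} [Field K] [NumberField K] [Field L]
    [NumberField L] [Algebra K L] {P : Ideal (𝓞 K)} (hP : P ≠ ⊥) (Q : Ideal (𝓞 L)) [Q.IsPrime]
    [Q.LiesOver P] : P.ramificationIdx' Q ≤ finrank K L := by
  have : P.IsMaximal := (Ideal.isPrime_of_liesOver Q P).isMaximal hP
  rw [Ideal.ramificationIdx'_eq_ramificationIdx P Q hP, IsFractionRing.finrank_eq (𝓞 K) K (𝓞 L) L,
    ← Ideal.sum_ramification_inertia_eq_finrank P (𝓞 L)]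
  calc Q.ramificationIdx (𝓞 K) ≤ Q.ramificationIdx (𝓞 K) * Q.inertiaDeg (𝓞 K) :=
        Nat.le_mul_of_pos_right _ (Q.inertiaDeg_pos _)
    _ ≤ _ := Finset.single_le_sum (f := fun q : P.primesOver (𝓞 L) ↦
          q.1.ramificationIdx (𝓞 K) * q.1.inertiaDeg (𝓞 K))
          (fun _ _ ↦ Nat.zero_le _) (Finset.mem_univ ⟨Q, ‹_›, ‹_›⟩)

theorem IsPrimitiveRoot.finrank_adjoin_le_totient {K E : Type*} [Field K] [Field E] [Algebra K E]
    {n : ℕ} (hn : 0 < n) {ζ : E} (hζ : IsPrimitiveRoot ζ n) : finrank K K⟮ζ⟯ ≤ n.totient := by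
  rw [adjoin.finrank (hζ.isIntegral hn).tower_top, ← Polynomial.natDegree_cyclotomic n K]
  refine Polynomial.natDegree_le_of_dvd (minpoly.dvd K ζ ?_) (Polynomial.cyclotomic_ne_zero n K)
  rw [Polynomial.aeval_def, ← Polynomial.eval_map, Polynomial.map_cyclotomic]
  exact hζ.isRoot_cyclotomic hn

namespace IsPrimitiveRoot

variable {L : Type*} [Field L] {p : ℕ} [Fact p.Prime] {ζ : L}

theorem natCast_mem_pow_sub_one (hζ : IsPrimitiveRoot ζ p) {Q : Ideal (𝓞 L)} [hQ : Q.IsPrime]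
    (hpQ : (p : 𝓞 L) ∈ Q) : (p : 𝓞 L) ∈ Q ^ (p - 1) := by
  have hassoc := IsCyclotomicExtension.Rat.associated_zeta_sub_one_pow_prime p hζ
  have hmem : hζ.toInteger - 1 ∈ Q :=
    hQ.mem_of_pow_mem _ (Q.mem_of_dvd hassoc.symm.dvd hpQ)
  rw [← Ideal.span_singleton_le_iff_mem, ← Ideal.span_singleton_eq_span_singleton.mpr hassoc,
    ← Ideal.span_singleton_pow]
  exact Ideal.pow_right_mono ((Ideal.span_singleton_le_iff_mem _).mpr hmem) _

theorem sub_one_le_ramificationIdx' [NumberField L] (hζ : IsPrimitiveRoot ζ p) {Q : Ideal (𝓞 L)}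
    [Q.IsPrime] (hpQ : (p : 𝓞 L) ∈ Q) :
    p - 1 ≤ Ideal.ramificationIdx' (Ideal.span {(p : ℤ)}) Q := by
  refine Ideal.le_ramificationIdx'_of_map_le_pow (Ideal.map_ne_bot_of_ne_bot ?_) ?_
  · simpa using (Fact.out : p.Prime).ne_zero
  · rw [Ideal.map_span, Set.image_singleton, Ideal.span_singleton_le_iff_mem]
    simpa using hζ.natCast_mem_pow_sub_one hpQ

theorem sub_one_le_ramificationIdx'_of_isUnramifiedIn {K : Type*} [Field K] [NumberField K]
    [NumberField L] [Algebra K L] (hunr : IsUnramifiedIn K p) (hζ : IsPrimitiveRoot ζ p)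
    {P : Ideal (𝓞 K)} [hP : P.IsPrime] (hpP : (p : 𝓞 K) ∈ P) (Q : Ideal (𝓞 L)) [Q.IsPrime]
    [Q.LiesOver P] : p - 1 ≤ P.ramificationIdx' Q := by
  have hp0 : Ideal.span {(p : ℤ)} ≠ ⊥ := by simpa using (Fact.out : p.Prime).ne_zero
  have hP0 : P ≠ ⊥ := by
    rintro rfl
    simp [(Fact.out : p.Prime).ne_zero] at hpP
  have hpQ : (p : 𝓞 L) ∈ Q := by simpa using (Ideal.mem_of_liesOver Q P _).mp hpP
  have htower := Ideal.ramificationIdx'_algebra_tower (Ideal.map_ne_bot_of_ne_bot hP0)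
    (Ideal.map_ne_bot_of_ne_bot hp0) (Ideal.map_le_iff_le_comap.mpr (Ideal.over_def Q P).le)
  calc p - 1 ≤ (Ideal.span {(p : ℤ)}).ramificationIdx' Q := hζ.sub_one_le_ramificationIdx' hpQ
    _ = P.ramificationIdx' Q := by rw [htower, hunr P hP hpP, one_mul]

end IsPrimitiveRoot

/-- Let `K` be a number field, `p` a prime number unramified in `K`,
`ζ ∈ ℂ` a primitive `p`-th root of unity and `F = K(ζ)`.  Then `F/K` has degree `p - 1`,
and every prime ideal of `𝓞 K` lying above `p` is totally ramified in `F/K`: every prime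
of `𝓞 F` lying above it has ramification index `p - 1` in `F/K`. -/
theorem degree_and_total_ramification_of_cyclotomic_extension
    (p : ℕ) (hp : p.Prime) (K : IntermediateField ℚ ℂ) [NumberField K]
    (ζ : ℂ) (hζ : IsPrimitiveRoot ζ p)
    (hunr : IsUnramifiedIn K p)
    (F : IntermediateField K ℂ) (hF : F = IntermediateField.adjoin K {ζ}) :
    Module.finrank K F = p - 1 ∧
      ∀ P : Ideal (𝓞 K), P.IsPrime → (p : 𝓞 K) ∈ P →
        ∀ Q : Ideal (𝓞 F), Q.IsPrime →
          Q.comap (algebraMap (𝓞 K) (𝓞 F)) = P →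
          Ideal.ramificationIdx' P Q = p - 1 := by
  subst hF
  have : Fact p.Prime := ⟨hp⟩
  have : FiniteDimensional K K⟮ζ⟯ :=
    adjoin.finiteDimensional (hζ.isIntegral hp.pos).tower_top
  have : NumberField K⟮ζ⟯ := .of_module_finite K _
  have hζF : IsPrimitiveRoot (AdjoinSimple.gen K ζ) p :=
    .of_map_of_injective (f := algebraMap K⟮ζ⟯ ℂ) hζ (algebraMap K⟮ζ⟯ ℂ).injective
  have hbounds (P : Ideal (𝓞 K)) [P.IsPrime] (hpP : (p : 𝓞 K) ∈ P) (Q : Ideal (𝓞 K⟮ζ⟯))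
      [Q.IsPrime] [Q.LiesOver P] :
      p - 1 ≤ P.ramificationIdx' Q ∧ P.ramificationIdx' Q ≤ finrank K K⟮ζ⟯ :=
    ⟨hζF.sub_one_le_ramificationIdx'_of_isUnramifiedIn hunr hpP Q,
      ramificationIdx'_le_finrank (by rintro rfl; simp [hp.ne_zero] at hpP) Q⟩
  have hdeg : finrank K K⟮ζ⟯ = p - 1 := by
    obtain ⟨⟨P, _, _⟩⟩ := (Ideal.span {(p : ℤ)}).nonempty_primesOver (S := 𝓞 K)
    have hpP : (p : 𝓞 K) ∈ P := by
      simpa using (Ideal.mem_of_liesOver P (Ideal.span {(p : ℤ)}) _).mp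
        (Ideal.mem_span_singleton_self _)
    obtain ⟨⟨Q, _, _⟩⟩ := P.nonempty_primesOver (S := 𝓞 K⟮ζ⟯)
    obtain ⟨hlower, hupper⟩ := hbounds P hpP Q
    refine le_antisymm ?_ (hlower.trans hupper)
    simpa [Nat.totient_prime hp] using hζ.finrank_adjoin_le_totient (K := K) hp.pos
  refine ⟨hdeg, fun P _ hpP Q _ hQP ↦ ?_⟩
  have : Q.LiesOver P := ⟨hQP.symm⟩
  obtain ⟨hlower, hupper⟩ := hbounds P hpP Q
  exact le_antisymm (hupper.trans hdeg.le) hlower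
end

section
/- The element (1/p)(1 + α + α² + ⋯ + α^{p−1}) is an algebraic integer, i.e., it lies in O_L. -/
open NumberField

/-- An extension `M/N` of number fields is (at most) tamely ramified if for every nonzero
prime ideal `P` of `𝓞 M` the ramification index of `P` over `N` is coprime to the
characteristic of the residue field of `P`. -/
def IsTamelyRamified (N M : Type*) [Field N] [Field M] [Algebra N M] : Prop :=
  ∀ P : Ideal (𝓞 M), P.IsPrime → P ≠ ⊥ →
    ∀ q : ℕ, q.Prime → (q : 𝓞 M) ∈ P →
      Nat.Coprime
        (Ideal.ramificationIdx'
          (P.comap (algebraMap (𝓞 N) (𝓞 M))) P) q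

/-!
Write `θ = p⁻¹ (1 + α + ⋯ + α^(p-1))` and `α^p = a = 1 + p²μ`.
Then `θ (α - 1) = (a - 1) / p = pμ`, so `θ α = θ + pμ` and `(1 + p²μ) θ^p = (θ + pμ)^p`.
In the binomial expansion of the right-hand side the terms `θ^p` cancel and every remaining term
is divisible by `p²μ`; dividing it out leaves a monic equation for `θ` whose coefficients are
polynomials in `p` and `μ`, hence integral.
-/

open Polynomial Finset

noncomputable def traceElementPoly {S : Type*} [CommRing S] (p : ℕ) (μ : S) : S[X] :=
  X ^ p - X ^ (p - 1) -
    ∑ k ∈ range (p - 1), C (p.choose k * (p : S) ^ (p - 2 - k) * μ ^ (p - 1 - k)) * X ^ k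

section
variable {S : Type*} [CommRing S]

theorem traceElementPoly_monic {p : ℕ} (hp : 1 ≤ p) (μ : S) : (traceElementPoly p μ).Monic := by
  unfold traceElementPoly
  rw [sub_sub]
  refine monic_X_pow_sub ((degree_add_le _ _).trans_lt (max_lt ?_ ?_))
  · exact (degree_X_pow_le _).trans_lt (by exact_mod_cast Nat.sub_lt hp one_pos)
  · refine (degree_sum_le _ _).trans_lt
      ((Finset.sup_lt_iff (WithBot.bot_lt_coe p)).2 fun k hk => ?_)
    exact (degree_C_mul_X_pow_le _ _).trans_lt (WithBot.coe_lt_coe.2 (by grind))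

theorem map_traceElementPoly {T : Type*} [CommRing T] (f : S →+* T) (p : ℕ) (μ : S) :
    (traceElementPoly p μ).map f = traceElementPoly p (f μ) := by
  simp [traceElementPoly, Polynomial.map_sum]

theorem mul_eval_traceElementPoly {p : ℕ} (hp : 1 ≤ p) (μ x : S) :
    (p : S) ^ 2 * μ * (traceElementPoly p μ).eval x =
      (1 + (p : S) ^ 2 * μ) * x ^ p - (x + p * μ) ^ p := by
  obtain ⟨n, rfl⟩ := Nat.exists_eq_add_of_le' hp
  have tail : ∀ k ∈ range n, x ^ k * (((n + 1 : ℕ) : S) * μ) ^ (n + 1 - k) * ((n + 1).choose k) =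
      ((n + 1 : ℕ) : S) ^ 2 * μ * (((n + 1).choose k * ((n + 1 : ℕ) : S) ^ (n + 1 - 2 - k) *
        μ ^ (n + 1 - 1 - k)) * x ^ k) := fun k hk => by
    obtain ⟨j, rfl⟩ := Nat.exists_eq_add_of_lt (mem_range.1 hk)
    rw [show k + j + 1 + 1 - k = j + 2 by omega, show k + j + 1 + 1 - 2 - k = j by omega,
      show k + j + 1 + 1 - 1 - k = j + 1 by omega]
    ring
  simp only [traceElementPoly, eval_sub, eval_pow, eval_X, eval_finsetSum, eval_mul, eval_C]
  rw [add_pow, sum_range_succ, sum_range_succ, sum_congr rfl tail, ← mul_sum]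
  simp only [Nat.add_sub_cancel, Nat.sub_self, Nat.choose_self, Nat.choose_succ_self_right,
    show n + 1 - n = 1 by omega]
  push_cast
  ring

end

theorem isIntegral_inv_mul_geom_sum_of_pow_eq {R F : Type*} [CommRing R] [Field F] [Algebra R F]
    {p : ℕ} {A μ : F} (hμ : IsIntegral R μ) (hA : A ^ p = 1 + p ^ 2 * μ) :
    IsIntegral R ((p : F)⁻¹ * ∑ k ∈ range p, A ^ k) := by
  set θ := (p : F)⁻¹ * ∑ k ∈ range p, A ^ k
  by_cases hp : (p : F) = 0
  · simp [θ, hp, isIntegral_zero]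
  have hθA : θ * (A - 1) = p * μ := by
    rw [mul_assoc, geom_sum_mul, hA]
    field_simp
    ring
  by_cases hμ0 : μ = 0
  · subst hμ0
    rcases mul_eq_zero.1 (hθA.trans (mul_zero _)) with hθ | hA1
    · exact hθ ▸ isIntegral_zero
    · have : θ = 1 := by simp [θ, sub_eq_zero.1 hA1, hp]
      exact this ▸ isIntegral_one
  have hp1 : 1 ≤ p := Nat.one_le_iff_ne_zero.2 (by rintro rfl; simp at hp)
  have hroot : (traceElementPoly p μ).eval θ = 0 := by
    have h := mul_eval_traceElementPoly hp1 μ θ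
    rw [show θ + p * μ = θ * A by linear_combination -hθA, mul_pow θ A, hA, mul_comm (θ ^ p),
      sub_self] at h
    exact (mul_eq_zero.1 h).resolve_left (mul_ne_zero (pow_ne_zero 2 hp) hμ0)
  let S := integralClosure R F
  refine isIntegral_trans (A := S) θ ⟨traceElementPoly p ⟨μ, hμ⟩, traceElementPoly_monic hp1 _, ?_⟩
  rw [eval₂_eq_eval_map, map_traceElementPoly]
  exact hroot

theorem trace_element_is_integral_general
    (p : ℕ) (K : IntermediateField ℚ ℂ)
    (L : IntermediateField K ℂ)
    (α : 𝓞 L)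
    (a : 𝓞 K) (ha : algebraMap (𝓞 K) (𝓞 L) a = α ^ p)
    (hcong : ∃ m : 𝓞 K, a - 1 = (p : 𝓞 K) ^ 2 * m) :
    ((p : ℂ)⁻¹ * ∑ k ∈ Finset.range p, ((α : L) : ℂ) ^ k) ∈ L ∧
      IsIntegral ℤ ((p : ℂ)⁻¹ * ∑ k ∈ Finset.range p, ((α : L) : ℂ) ^ k) := by
  obtain ⟨m, hm⟩ := hcong
  have hcoe : ∀ x : 𝓞 K, ((algebraMap (𝓞 K) (𝓞 L) x : L) : ℂ) = ((x : K) : ℂ) := fun _ => rfl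
  have hαp : ((α : L) : ℂ) ^ p = 1 + p ^ 2 * ((m : K) : ℂ) := by
    have h := congrArg (fun x : 𝓞 L => ((x : L) : ℂ)) ha
    rw [sub_eq_iff_eq_add'.1 hm, hcoe] at h
    simpa using h.symm
  exact ⟨mul_mem (L.inv_mem (IntermediateField.natCast_mem L p))
      (sum_mem fun k _ => pow_mem (α : L).2 k),
    isIntegral_inv_mul_geom_sum_of_pow_eq
      (map_isIntegral_int K.val (RingOfIntegers.isIntegral_coe m)) hαp⟩

/-- The element `(1/p)(1 + α + α² + ⋯ + α^(p-1))` is an algebraic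
integer, i.e. it lies in `𝓞 L`. -/
theorem trace_element_is_integral
    (p : ℕ) (hp : p.Prime) (K : IntermediateField ℚ ℂ) [NumberField K]
    (hunr : IsUnramifiedIn K p)
    (ζ : ℂ) (hζ : IsPrimitiveRoot ζ p) (hζK : ζ ∉ K)
    (ω : ℂ) (hωK : ω ^ p ∈ K) (hωnp : ¬∃ x ∈ K, x ^ p = ω ^ p)
    (L : IntermediateField K ℂ) (hL : L = IntermediateField.adjoin K {ω})
    (htame : IsTamelyRamified K L)
    (α : 𝓞 L) (hαgen : IntermediateField.adjoin K {((α : L) : ℂ)} = L)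
    (a : 𝓞 K) (ha : algebraMap (𝓞 K) (𝓞 L) a = α ^ p)
    (hcong : ∃ m : 𝓞 K, a - 1 = (p : 𝓞 K) ^ 2 * m) :
    ((p : ℂ)⁻¹ * ∑ k ∈ Finset.range p, ((α : L) : ℂ) ^ k) ∈ L ∧
      IsIntegral ℤ ((p : ℂ)⁻¹ * ∑ k ∈ Finset.range p, ((α : L) : ℂ) ^ k) :=
  trace_element_is_integral_general p K L α a ha hcong
end

section
/- There exists an injective group homomorphism β : G → Hol(M) with β(G′) = Stab(1_M), namely β(σ) = (μ, 1) and β(τ) = (1, θ) where θ ∈ Aut(M) is defined by θ(μ) = μ^d. Moreover, if β′ : G → Hol(M) is any injective group homomorphism with β′(G′) = Stab(1_M), then there exists φ ∈ Aut(M) such that β′(g) = (1, φ) β(g) (1, φ)⁻¹ for all g ∈ G. -/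
open SemidirectProduct Subgroup

section Helpers
variable {C H : Type*} [Group C] [Group H]

lemma my_exists_pow_eq_of_mem_zpowers {a x : C} (ha : IsOfFinOrder a)
    (hx : x ∈ Subgroup.zpowers a) : ∃ k : ℕ, a ^ k = x := by
  obtain ⟨k, hk⟩ := ha.mem_powers_iff_mem_zpowers.mpr hx
  exact ⟨k, hk⟩

lemma my_hom_ext_of_gen {c : C} (hc : Subgroup.zpowers c = ⊤) {f g : C →* H}
    (h : f c = g c) : f = g := by
  ext x
  obtain ⟨k, rfl⟩ := Subgroup.mem_zpowers_iff.mp (hc ▸ Subgroup.mem_top x)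
  rw [map_zpow, map_zpow, h]

lemma my_exists_monoidHom_of_gen {c : C} (hc : Subgroup.zpowers c = ⊤) {h : H}
    (hh : h ^ orderOf c = 1) : ∃ f : C →* H, f c = h := by
  have surj : Function.Surjective (zpowersHom C c) := by
    intro x
    obtain ⟨k, hk⟩ := Subgroup.mem_zpowers_iff.mp (hc ▸ Subgroup.mem_top x)
    exact ⟨Multiplicative.ofAdd k, hk⟩
  have hker : (zpowersHom C c).ker ≤ (zpowersHom H h).ker := by
    rw [zpowersHom_ker_eq]
    intro x hx
    obtain ⟨k, hk⟩ := Subgroup.mem_zpowers_iff.mp hx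
    have hh' : h ^ (orderOf c : ℤ) = 1 := by
      rw [zpow_natCast, hh]
    simp only [MonoidHom.mem_ker, zpowersHom_apply]
    rw [← hk]
    simp only [← ofAdd_zsmul, toAdd_ofAdd, smul_eq_mul]
    rw [mul_comm, zpow_mul, hh', one_zpow]
  let e := QuotientGroup.quotientKerEquivOfSurjective _ surj
  refine ⟨(QuotientGroup.lift _ (zpowersHom H h) hker).comp e.symm.toMonoidHom, ?_⟩
  have hc' : e ((QuotientGroup.mk (Multiplicative.ofAdd (1 : ℤ)))) = c := by
    show (zpowersHom C c) (Multiplicative.ofAdd 1) = c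
    simp
  have hsymm : e.symm c = QuotientGroup.mk (Multiplicative.ofAdd (1 : ℤ)) :=
    e.symm_apply_eq.mpr hc'.symm
  simp only [MonoidHom.comp_apply, MulEquiv.coe_toMonoidHom, hsymm]
  rw [QuotientGroup.lift_mk]
  simp

end Helpers

/-- The holomorph `Hol(M) = M ⋊ Aut(M)` acts on `M` by `(m, φ) · x = m * φ x`. -/
instance holomorphMulAction (M : Type*) [Group M] :
    MulAction (M ⋊[MonoidHom.id (MulAut M)] MulAut M) M where
  smul g x := g.left * g.right x
  one_smul x := by
    show (1 : M ⋊[MonoidHom.id (MulAut M)] MulAut M).left *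
      (1 : M ⋊[MonoidHom.id (MulAut M)] MulAut M).right x = x
    simp
  mul_smul g h x := by
    show (g * h).left * (g * h).right x = g.left * g.right (h.left * h.right x)
    simp [mul_assoc]

/-- There is an injective group homomorphism `β : G → Hol(M)` with
`β(⟨τ⟩) = Stab(1_M)`, given by `β σ = (μ, 1)` and `β τ = (1, θ)` where `θ μ = μ^d`;
moreover any injective homomorphism `β' : G → Hol(M)` with `β'(⟨τ⟩) = Stab(1_M)` is
conjugate to `β` by an element of `Aut(M)`. -/
theorem exists_unique_embedding_into_holomorph
    (p : ℕ) (hp : p.Prime) (d : ℕ) (hd : IsPrimitiveRoot (d : ZMod p) (p - 1))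
    (G : Type*) [Group G] (σ τ : G)
    (hσ : orderOf σ = p) (hτ : orderOf τ = p - 1)
    (hrel : τ * σ * τ⁻¹ = σ ^ d) (hgen : Subgroup.closure {σ, τ} = ⊤)
    (M : Type*) [Group M] (μ : M) (hμ : orderOf μ = p)
    (hMgen : Subgroup.zpowers μ = ⊤)
    (θ : MulAut M) (hθ : θ μ = μ ^ d) :
    ∃ β : G →* (M ⋊[MonoidHom.id (MulAut M)] MulAut M),
      Function.Injective β ∧
      β σ = inl μ ∧ β τ = inr θ ∧
      Subgroup.map β (Subgroup.zpowers τ) =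
        MulAction.stabilizer (M ⋊[MonoidHom.id (MulAut M)] MulAut M) (1 : M) ∧
      ∀ β' : G →* (M ⋊[MonoidHom.id (MulAut M)] MulAut M),
        Function.Injective β' →
        Subgroup.map β' (Subgroup.zpowers τ) =
          MulAction.stabilizer (M ⋊[MonoidHom.id (MulAut M)] MulAut M) (1 : M) →
        ∃ φ : MulAut M, ∀ g : G, β' g = inr φ * β g * (inr φ)⁻¹ := by
  haveI : Fact p.Prime := ⟨hp⟩
  have hp2 : 2 ≤ p := hp.two_le
  have hp1 : 1 ≤ p - 1 := by omega
  -- basic facts about μ and M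
  have hμfin : IsOfFinOrder μ := by rw [← orderOf_pos_iff, hμ]; exact hp.pos
  have hμpow : ∀ x : M, x ^ p = 1 := by
    intro x
    obtain ⟨k, rfl⟩ := Subgroup.mem_zpowers_iff.mp (hMgen ▸ Subgroup.mem_top x)
    rw [← zpow_natCast, ← zpow_mul, mul_comm, zpow_mul, zpow_natCast, ← hμ,
      pow_orderOf_eq_one, one_zpow]
  have hcardM : Nat.card M = p := by
    have h := Nat.card_zpowers μ
    rw [hMgen, Subgroup.card_top, hμ] at h
    exact h
  haveI : Finite M := (Nat.card_pos_iff.mp (by rw [hcardM]; exact hp.pos)).2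
  have hμne : μ ≠ 1 := by
    intro h; rw [h, orderOf_one] at hμ; omega
  -- two automorphisms agreeing on a generator are equal
  have autext : ∀ {g : M}, Subgroup.zpowers g = ⊤ → ∀ ψ₁ ψ₂ : MulAut M,
      ψ₁ g = ψ₂ g → ψ₁ = ψ₂ := by
    intro g hg ψ₁ ψ₂ h
    apply MulEquiv.ext; intro x
    obtain ⟨k, rfl⟩ := Subgroup.mem_zpowers_iff.mp (hg ▸ Subgroup.mem_top x)
    rw [map_zpow, map_zpow, h]
  -- powers of θ
  have hθpow : ∀ j : ℕ, (θ ^ j) μ = μ ^ d ^ j := by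
    intro j; induction j with
    | zero => simp
    | succ n ih =>
      rw [pow_succ θ, pow_succ d]
      show (θ ^ n) (θ μ) = μ ^ (d ^ n * d)
      rw [hθ, map_pow, ih, ← pow_mul]
  have hmod : ∀ a b : ℕ, (μ ^ a = μ ^ b ↔ a ≡ b [MOD p]) := fun a b => by
    rw [pow_eq_pow_iff_modEq, hμ]
  have hZn : ∀ k : ℕ, ((d : ZMod p) ^ k = 1 ↔ d ^ k ≡ 1 [MOD p]) := fun k => by
    rw [← Nat.cast_pow, ← Nat.cast_one, ZMod.natCast_eq_natCast_iff]
  have hkey : ∀ k : ℕ, ((θ ^ k) μ = μ ↔ (p - 1) ∣ k) := by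
    intro k
    rw [hθpow, ← hd.pow_eq_one_iff_dvd, hZn]
    nth_rewrite 2 [show μ = μ ^ 1 by rw [pow_one]]
    rw [hmod]

  have hθord : orderOf θ = p - 1 := by
    apply Nat.dvd_antisymm
    · apply orderOf_dvd_of_pow_eq_one
      apply autext hMgen
      rw [(hkey (p - 1)).mpr dvd_rfl]
      simp
    · apply (hkey (orderOf θ)).mp
      rw [pow_orderOf_eq_one θ]
      simp
  have hθfin : IsOfFinOrder θ := by rw [← orderOf_pos_iff, hθord]; omega
  -- every automorphism of M is a power of θ
  have hψ : ∀ ψ : MulAut M, ∃ j : ℕ, ψ = θ ^ j := by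
    intro ψ
    obtain ⟨k, hk⟩ := my_exists_pow_eq_of_mem_zpowers hμfin
      (hMgen ▸ Subgroup.mem_top (ψ μ))
    have hk0 : (k : ZMod p) ≠ 0 := by
      intro h
      have hdvd : p ∣ k := (ZMod.natCast_eq_zero_iff _ _).mp h
      have h1 : μ ^ k = 1 := orderOf_dvd_iff_pow_eq_one.mp (hμ ▸ hdvd)
      rw [hk] at h1
      exact hμne (ψ.injective (by rw [h1, map_one]))
    obtain ⟨j, hj⟩ : ∃ j : ℕ, (d : ZMod p) ^ j = (k : ZMod p) := by
      have hdu : IsUnit (d : ZMod p) := hd.isUnit (by omega)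
      obtain ⟨du, hdu⟩ := hdu
      have hdord : orderOf (d : ZMod p) = p - 1 := hd.eq_orderOf.symm
      have hduord : orderOf du = p - 1 := by rw [← orderOf_units, hdu, hdord]
      have hdutop : Subgroup.zpowers du = ⊤ := by
        apply Subgroup.eq_top_of_card_eq
        rw [Nat.card_zpowers, hduord, Nat.card_eq_fintype_card,
          ZMod.card_units_eq_totient, Nat.totient_prime hp]
      obtain ⟨ku, hku⟩ := Ne.isUnit hk0
      obtain ⟨j, hj⟩ := my_exists_pow_eq_of_mem_zpowers
        (by rw [← orderOf_pos_iff, hduord]; omega) (hdutop ▸ Subgroup.mem_top ku)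
      exact ⟨j, by rw [← hdu, ← hku, ← hj, Units.val_pow_eq_pow_val]⟩
    refine ⟨j, (autext hMgen _ _ ?_).symm⟩
    rw [hθpow, ← hk]
    rw [hmod]
    rw [← ZMod.natCast_eq_natCast_iff]
    push_cast
    exact hj
  have hθtop : Subgroup.zpowers θ = ⊤ := by
    rw [eq_top_iff]
    intro ψ _
    obtain ⟨j, rfl⟩ := hψ ψ
    exact pow_mem (Subgroup.mem_zpowers θ) j
  have hψexp : ∀ ψ : MulAut M, ψ ^ (p - 1) = 1 := by
    intro ψ
    obtain ⟨j, rfl⟩ := hψ ψ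
    rw [← pow_mul, mul_comm, pow_mul, ← hθord, pow_orderOf_eq_one, one_pow]
  -- construct the two component maps
  obtain ⟨f₁, hf₁⟩ := my_exists_monoidHom_of_gen hMgen (h := σ)
    (by rw [hμ, ← hσ, pow_orderOf_eq_one])
  obtain ⟨f₂, hf₂⟩ := my_exists_monoidHom_of_gen hθtop (h := τ)
    (by rw [hθord, ← hτ, pow_orderOf_eq_one])
  have hstep : ∀ n : M, f₁ (θ n) = τ * f₁ n * τ⁻¹ := by
    have h : f₁.comp θ.toMonoidHom = (MulAut.conj τ).toMonoidHom.comp f₁ := by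
      apply my_hom_ext_of_gen hMgen
      simp only [MonoidHom.comp_apply, MulEquiv.coe_toMonoidHom, MulAut.conj_apply]
      rw [hθ, map_pow, hf₁, ← hrel]
    intro n
    have := DFunLike.ext_iff.mp h n
    simpa [MulAut.conj_apply] using this
  have hconj : ∀ j : ℕ, ∀ n : M, f₁ ((θ ^ j) n) = τ ^ j * f₁ n * (τ ^ j)⁻¹ := by
    intro j; induction j with
    | zero => simp
    | succ m ih =>
      intro n
      rw [pow_succ θ]
      show f₁ ((θ ^ m) (θ n)) = _
      rw [ih (θ n), hstep n, pow_succ]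
      group
  have hcompat : ∀ g : MulAut M,
      f₁.comp ((MonoidHom.id (MulAut M)) g).toMonoidHom =
        (MulAut.conj (f₂ g)).toMonoidHom.comp f₁ := by
    intro g
    obtain ⟨j, rfl⟩ := hψ g
    ext n
    simp only [MonoidHom.id_apply, MonoidHom.comp_apply, MulEquiv.coe_toMonoidHom,
      MulAut.conj_apply]
    rw [hconj j n, map_pow, hf₂]
  set α := SemidirectProduct.lift f₁ f₂ hcompat with hα
  have hασ : α (inl μ) = σ := by rw [hα, lift_inl, hf₁]
  have hατ : α (inr θ) = τ := by rw [hα, lift_inr, hf₂]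
  have hαsurj : Function.Surjective α := by
    have hle : Subgroup.closure {σ, τ} ≤ α.range := by
      rw [Subgroup.closure_le]
      rintro x (rfl | rfl)
      · exact ⟨inl μ, hασ⟩
      · exact ⟨inr θ, hατ⟩
    rw [hgen] at hle
    intro x
    exact hle (Subgroup.mem_top x)
  have hαinj : Function.Injective α := by
    rw [injective_iff_map_eq_one]
    rintro ⟨m, ψ⟩ hx
    obtain ⟨i, hi⟩ := Subgroup.mem_zpowers_iff.mp (hMgen ▸ Subgroup.mem_top m)
    obtain ⟨j, rfl⟩ := hψ ψ
    subst hi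
    have hx' : σ ^ i * τ ^ j = 1 := by
      have hli : α ⟨μ ^ i, θ ^ j⟩ = f₁ (μ ^ i) * f₂ (θ ^ j) := rfl
      rw [hli, map_zpow, map_pow, hf₁, hf₂] at hx
      exact hx
    have hcop : Nat.Coprime p (p - 1) := by
      have hg := Nat.dvd_sub (Nat.gcd_dvd_left p (p - 1)) (Nat.gcd_dvd_right p (p - 1))
      have h1 : p - (p - 1) = 1 := by omega
      rw [h1] at hg
      exact Nat.dvd_one.mp hg
    have hσi : σ ^ i = 1 := by
      have h1 : (σ ^ i) ^ p = 1 := by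
        rw [← zpow_natCast, ← zpow_mul, mul_comm, zpow_mul, zpow_natCast, ← hσ,
          pow_orderOf_eq_one, one_zpow]
      have heq : σ ^ i = (τ ^ j)⁻¹ := by
        rw [eq_inv_iff_mul_eq_one]; exact hx'
      have hτp : (τ ^ j) ^ (p - 1) = 1 := by
        rw [← pow_mul, mul_comm, pow_mul, ← hτ, pow_orderOf_eq_one, one_pow]
      have h2 : (σ ^ i) ^ (p - 1) = 1 := by
        rw [heq, inv_pow, hτp, inv_one]
      have hdvd : orderOf (σ ^ i) ∣ Nat.gcd p (p - 1) :=
        Nat.dvd_gcd (orderOf_dvd_of_pow_eq_one h1) (orderOf_dvd_of_pow_eq_one h2)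
      rw [Nat.Coprime.gcd_eq_one hcop] at hdvd
      rw [← orderOf_eq_one_iff]
      exact Nat.dvd_one.mp hdvd
    have hτj : τ ^ j = 1 := by
      rw [hσi, one_mul] at hx'
      exact hx'
    have hpi : μ ^ i = 1 := by
      have : (p : ℤ) ∣ i := by
        rw [← hσ]
        exact orderOf_dvd_iff_zpow_eq_one.mpr hσi
      rw [← hμ] at this
      exact orderOf_dvd_iff_zpow_eq_one.mp this
    have hθj : θ ^ j = 1 := by
      have : p - 1 ∣ j := by
        rw [← hτ]
        exact orderOf_dvd_of_pow_eq_one hτj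
      rw [← hθord] at this
      exact orderOf_dvd_iff_pow_eq_one.mp this
    show (⟨μ ^ i, θ ^ j⟩ : M ⋊[MonoidHom.id (MulAut M)] MulAut M) = 1
    rw [hpi, hθj]
    rfl
  -- the equivalence and β
  set e := MulEquiv.ofBijective α ⟨hαinj, hαsurj⟩ with he
  have heα : ∀ x, e x = α x := fun x => rfl
  have hβσ : e.symm σ = inl μ := by
    rw [MulEquiv.symm_apply_eq, heα, hασ]
  have hβτ : e.symm τ = inr θ := by
    rw [MulEquiv.symm_apply_eq, heα, hατ]
  -- stabilizer of 1
  have hstab : MulAction.stabilizer (M ⋊[MonoidHom.id (MulAut M)] MulAut M) (1 : M) =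
      (inr : MulAut M →* M ⋊[MonoidHom.id (MulAut M)] MulAut M).range := by
    ext s
    rw [MulAction.mem_stabilizer_iff]
    have hsmul : s • (1 : M) = s.left * s.right 1 := rfl
    rw [hsmul, map_one, mul_one]
    constructor
    · intro h
      refine ⟨s.right, ?_⟩
      ext
      · rw [h]; rfl
      · rfl
    · rintro ⟨ψ, rfl⟩
      rfl
  refine ⟨e.symm.toMonoidHom, e.symm.injective, hβσ, hβτ, ?_, ?_⟩
  · rw [MonoidHom.map_zpowers]
    show Subgroup.zpowers (e.symm τ) = _
    rw [hβτ, hstab, ← MonoidHom.map_zpowers, hθtop, ← MonoidHom.range_eq_map]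
  -- uniqueness
  intro β' hβ'inj hβ'map
  set s := β' σ with hs
  have hso : orderOf s = p := by rw [hs, orderOf_injective β' hβ'inj, hσ]
  have hsr : s.right = 1 := by
    have h1 : s.right ^ p = 1 := by
      have hp1' := pow_orderOf_eq_one s
      rw [hso] at hp1'
      have := congrArg (SemidirectProduct.rightHom) hp1'
      simpa [map_pow] using this
    have h2 : s.right ^ (p - 1) = 1 := hψexp s.right
    have hdvd : orderOf s.right ∣ Nat.gcd p (p - 1) :=
      Nat.dvd_gcd (orderOf_dvd_of_pow_eq_one h1) (orderOf_dvd_of_pow_eq_one h2)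
    have hcop : Nat.gcd p (p - 1) = 1 := by
      have hg := Nat.dvd_sub (Nat.gcd_dvd_left p (p - 1)) (Nat.gcd_dvd_right p (p - 1))
      have h1' : p - (p - 1) = 1 := by omega
      rw [h1'] at hg
      exact Nat.dvd_one.mp hg
    rw [hcop] at hdvd
    rw [← orderOf_eq_one_iff]
    exact Nat.dvd_one.mp hdvd
  set m₀ := s.left with hm₀
  have hsinl : s = inl m₀ := by
    ext
    · rfl
    · rw [hsr]; rfl
  have hm₀ord : orderOf m₀ = p := by
    have := orderOf_injective (inl : M →* M ⋊[MonoidHom.id (MulAut M)] MulAut M)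
      inl_injective m₀
    rw [← this, ← hsinl, hso]
  have hm₀gen : Subgroup.zpowers m₀ = ⊤ := by
    apply Subgroup.eq_top_of_card_eq
    rw [Nat.card_zpowers, hm₀ord, hcardM]
  -- β' τ lands in the stabilizer
  have hτmem : β' τ ∈ MulAction.stabilizer (M ⋊[MonoidHom.id (MulAut M)] MulAut M)
      (1 : M) := hβ'map ▸ Subgroup.mem_map_of_mem β' (Subgroup.mem_zpowers τ)
  have hτl : (β' τ).left = 1 := by
    have h := MulAction.mem_stabilizer_iff.mp hτmem
    have hsmul : β' τ • (1 : M) = (β' τ).left * (β' τ).right 1 := rfl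
    rw [hsmul, map_one, mul_one] at h
    exact h
  set ψ₀ := (β' τ).right with hψ₀
  have hβ'τ : β' τ = inr ψ₀ := by
    ext
    · rw [hτl]; rfl
    · rfl
  -- the key relation
  have hψ₀m₀ : ψ₀ m₀ = m₀ ^ d := by
    have h := congrArg β' hrel
    rw [map_mul, map_mul, map_inv, map_pow, hβ'τ, ← hs, hsinl] at h
    rw [← map_pow, ← map_inv] at h
    have h' : (inl ((MonoidHom.id (MulAut M)) ψ₀ m₀) :
        M ⋊[MonoidHom.id (MulAut M)] MulAut M) = inl (m₀ ^ d) := by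
      rw [inl_aut]; exact h
    exact inl_injective h'
  -- construct the conjugating automorphism
  obtain ⟨a, ha⟩ := my_exists_pow_eq_of_mem_zpowers hμfin (hMgen ▸ Subgroup.mem_top m₀)
  have hm₀ne : m₀ ≠ 1 := by
    intro h; rw [h, orderOf_one] at hm₀ord; omega
  have ha0 : (a : ZMod p) ≠ 0 := by
    intro h
    have hdvd : p ∣ a := (ZMod.natCast_eq_zero_iff _ _).mp h
    have h1 : μ ^ a = 1 := orderOf_dvd_iff_pow_eq_one.mp (hμ ▸ hdvd)
    rw [ha] at h1
    exact hm₀ne h1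
  set b := ((a : ZMod p)⁻¹).val with hb
  have hab : a * b ≡ 1 [MOD p] := by
    rw [← ZMod.natCast_eq_natCast_iff]
    push_cast
    rw [hb, ZMod.natCast_val, ZMod.cast_id, mul_inv_cancel₀ ha0]
  have habx : ∀ x : M, (x ^ a) ^ b = x := by
    intro x
    rw [← pow_mul]
    nth_rewrite 2 [show x = x ^ 1 by rw [pow_one]]
    rw [pow_eq_pow_iff_modEq]
    exact (hab.of_dvd (orderOf_dvd_of_pow_eq_one (hμpow x)))
  have hbax : ∀ x : M, (x ^ b) ^ a = x := by
    intro x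
    rw [← pow_mul, mul_comm]
    nth_rewrite 2 [show x = x ^ 1 by rw [pow_one]]
    rw [pow_eq_pow_iff_modEq]
    exact (hab.of_dvd (orderOf_dvd_of_pow_eq_one (hμpow x)))
  have hcomm : ∀ x y : M, Commute x y := by
    intro x y
    obtain ⟨i, rfl⟩ := Subgroup.mem_zpowers_iff.mp (hMgen ▸ Subgroup.mem_top x)
    obtain ⟨j, rfl⟩ := Subgroup.mem_zpowers_iff.mp (hMgen ▸ Subgroup.mem_top y)
    exact (Commute.refl μ).zpow_zpow i j
  set φ : MulAut M :=
    { toFun := fun x => x ^ a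
      invFun := fun x => x ^ b
      left_inv := habx
      right_inv := hbax
      map_mul' := fun x y => (hcomm x y).mul_pow a } with hφdef
  have hφμ : φ μ = m₀ := ha
  have hφinv : φ⁻¹ m₀ = μ := by
    apply φ.injective
    show φ (φ⁻¹ m₀) = φ μ
    rw [MulAut.apply_inv_self, hφμ]
  refine ⟨φ, ?_⟩
  have hψ₀eq : ψ₀ = φ * θ * φ⁻¹ := by
    apply autext hm₀gen
    show ψ₀ m₀ = φ (θ (φ⁻¹ m₀))
    rw [hφinv, hθ, map_pow, hφμ, hψ₀m₀]
  have hmain : β' = (MulAut.conj ((inr φ : M ⋊[MonoidHom.id (MulAut M)] MulAut M))).toMonoidHom.comp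
      e.symm.toMonoidHom := by
    apply MonoidHom.eq_of_eqOn_dense hgen
    rintro x (h | h) <;> rw [h]
    · show β' σ = MulAut.conj (inr φ) (e.symm σ)
      rw [hβσ, MulAut.conj_apply, ← hs, hsinl]
      have h2 : (inl ((MonoidHom.id (MulAut M)) φ μ) :
          M ⋊[MonoidHom.id (MulAut M)] MulAut M) = inr φ * inl μ * (inr φ)⁻¹ := by
        rw [inl_aut, map_inv]
      rw [← h2]
      show inl m₀ = inl (φ μ)
      rw [hφμ]
    · show β' τ = MulAut.conj (inr φ) (e.symm τ)
      rw [hβτ, MulAut.conj_apply, hβ'τ, ← map_inv, ← map_mul, ← map_mul, hψ₀eq]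
  intro g
  rw [hmain]
  simp [MulAut.conj_apply]
end

section
/- Let η ∈ Perm(X) be defined by η(σ^i G′) = σ^{i−1} G′. Then λ(σ) ∘ η ∘ λ(σ)⁻¹ = η and λ(τ) ∘ η ∘ λ(τ)⁻¹ = η^d; consequently N = ⟨η⟩ is a regular subgroup of Perm(X) of order p that is normalized by λ(G). -/
/-!
Since `σ` and `τ` have coprime orders `p` and `p - 1`, `⟨σ⟩ ∩ ⟨τ⟩ = 1`; since `τ` conjugates `σ`
into `⟨σ⟩`, the subgroup `⟨σ⟩` is normal and `G = ⟨σ⟩⟨τ⟩`. Hence `i ↦ σ^i G'` identifies `ℤ/p`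
with `X`, and under this identification `η`, `λ(σ)` and `λ(τ)` become `i ↦ i - 1`, `i ↦ i + 1`
and `i ↦ d i`. Both conjugation formulas are then immediate, `⟨η⟩` is the translation group of
`ℤ/p`, which acts regularly, and a permutation conjugating `η` into the finite group `⟨η⟩`
normalizes it.
-/

open Subgroup

theorem Subgroup.mem_normalizer_zpowers_of_conj_mem {G : Type*} [Group G] {x y : G}
    (hy : IsOfFinOrder y) (h : x * y * x⁻¹ ∈ zpowers y) :
    x ∈ normalizer (zpowers y : Set G) := by
  have : Finite (zpowers y : Set G) := hy.finite_zpowers.to_subtype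
  refine mem_normalizer_fintype fun n hn => ?_
  obtain ⟨k, rfl⟩ := mem_zpowers_iff.mp hn
  simpa only [SetLike.mem_coe, conj_zpow] using zpow_mem h k

theorem Subgroup.zpowers_normal_of_closure_pair_eq_top {G : Type*} [Group G] {σ τ : G}
    (hσ : IsOfFinOrder σ) (hconj : τ * σ * τ⁻¹ ∈ zpowers σ) (hgen : closure {σ, τ} = ⊤) :
    (zpowers σ).Normal := by
  rw [← normalizer_eq_top_iff, eq_top_iff, ← hgen, closure_le]
  rintro x (rfl | rfl)
  · exact le_normalizer (mem_zpowers x)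
  · exact mem_normalizer_zpowers_of_conj_mem hσ hconj

theorem orderOf_eq_of_zpow_eq_one_iff {G : Type*} [Group G] {x : G} {n : ℕ}
    (h : ∀ m : ℤ, x ^ m = 1 ↔ (n : ℤ) ∣ m) : orderOf x = n :=
  Nat.dvd_antisymm
    (Int.natCast_dvd_natCast.mp (orderOf_dvd_iff_zpow_eq_one.mpr ((h n).mpr dvd_rfl)))
    (Int.natCast_dvd_natCast.mp ((h _).mp (by rw [zpow_natCast, pow_orderOf_eq_one])))

section Quotient

variable {G : Type*} [Group G] {H : Subgroup G} {σ : G}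

theorem QuotientGroup.zpow_coe_eq_zpow_coe_iff (h : Disjoint (zpowers σ) H) (i j : ℤ) :
    ((σ ^ i : G) : G ⧸ H) = ((σ ^ j : G) : G ⧸ H) ↔ (orderOf σ : ℤ) ∣ i - j := by
  have hmem : ∀ k : ℤ, σ ^ k ∈ H ↔ σ ^ k = 1 := fun k =>
    ⟨disjoint_def.mp h (zpow_mem_zpowers σ k), fun hk => hk ▸ H.one_mem⟩
  rw [QuotientGroup.eq, ← zpow_neg, ← zpow_add, hmem, ← orderOf_dvd_iff_zpow_eq_one,
    dvd_sub_comm, neg_add_eq_sub]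

theorem QuotientGroup.exists_zpow_coe_eq [(zpowers σ).Normal] (h : zpowers σ ⊔ H = ⊤)
    (x : G ⧸ H) : ∃ i : ℤ, ((σ ^ i : G) : G ⧸ H) = x := by
  obtain ⟨g, rfl⟩ := QuotientGroup.mk_surjective x
  have hg : g ∈ ((zpowers σ ⊔ H : Subgroup G) : Set G) := by rw [h]; trivial
  rw [normal_mul] at hg
  obtain ⟨_, hs, b, hb, rfl⟩ := hg
  obtain ⟨i, rfl⟩ := mem_zpowers_iff.mp hs
  exact ⟨i, (QuotientGroup.mk_mul_of_mem _ hb).symm⟩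

theorem QuotientGroup.coe_mul_zpow_of_conj_eq {τ : G} {d : ℕ} (hrel : τ * σ * τ⁻¹ = σ ^ d)
    (i : ℤ) : ((τ * σ ^ i : G) : G ⧸ zpowers τ) = ((σ ^ ((d : ℤ) * i) : G) : G ⧸ zpowers τ) := by
  have h : τ * σ ^ i = σ ^ ((d : ℤ) * i) * τ := by
    rw [zpow_mul, zpow_natCast, ← hrel, conj_zpow, inv_mul_cancel_right]
  rw [h, QuotientGroup.mk_mul_of_mem _ (mem_zpowers τ)]

end Quotient

section Presentation

variable {G : Type*} [Group G] {σ τ : G}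

theorem zpow_coe_quotient_zpowers_eq_iff {p : ℕ} (hp : p ≠ 0) (hσ : orderOf σ = p)
    (hτ : orderOf τ = p - 1) (i j : ℤ) :
    ((σ ^ i : G) : G ⧸ zpowers τ) = ((σ ^ j : G) : G ⧸ zpowers τ) ↔ (p : ℤ) ∣ i - j := by
  refine hσ ▸ QuotientGroup.zpow_coe_eq_zpow_coe_iff (disjoint_of_coprime_natCard ?_) i j
  rw [Nat.card_zpowers, Nat.card_zpowers, hσ, hτ, Nat.coprime_self_sub_right (by omega)]
  exact p.coprime_one_right

theorem surjective_zpow_coe_quotient_zpowers {d : ℕ} (hσ : IsOfFinOrder σ)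
    (hrel : τ * σ * τ⁻¹ = σ ^ d) (hgen : closure {σ, τ} = ⊤) :
    Function.Surjective fun i : ℤ => ((σ ^ i : G) : G ⧸ zpowers τ) := by
  have : (zpowers σ).Normal :=
    zpowers_normal_of_closure_pair_eq_top hσ ⟨d, by simp [hrel]⟩ hgen
  refine QuotientGroup.exists_zpow_coe_eq ?_
  rw [← hgen, Set.insert_eq, Subgroup.closure_union, zpowers_eq_closure, zpowers_eq_closure]

end Presentation

namespace Equiv.Perm

variable {X : Type*} {f : ℤ → X} {η : Perm X} {p : ℕ}

theorem zpow_apply_of_apply_eq_sub_one (hη : ∀ i, η (f i) = f (i - 1)) (m i : ℤ) :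
    (η ^ m) (f i) = f (i - m) := by
  induction m using Int.induction_on generalizing i with
  | zero => simp
  | succ m ih => rw [zpow_add_one, mul_apply, hη, ih]; congr 1; ring
  | pred m ih =>
    have hinv : η⁻¹ (f i) = f (i + 1) := inv_eq_iff_eq.mpr (by rw [hη, add_sub_cancel_right])
    rw [zpow_sub_one, mul_apply, hinv, ih]; congr 1; ring

theorem zpow_eq_one_iff_of_apply_eq_sub_one (hf : ∀ i j, f i = f j ↔ (p : ℤ) ∣ i - j)
    (hsurj : Function.Surjective f) (hη : ∀ i, η (f i) = f (i - 1)) (m : ℤ) :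
    η ^ m = 1 ↔ (p : ℤ) ∣ m := by
  refine ⟨fun h => ?_, fun h => ?_⟩
  · have h0 := zpow_apply_of_apply_eq_sub_one hη m 0
    rw [h, one_apply, eq_comm, hf] at h0
    simpa using h0
  · ext x
    obtain ⟨i, rfl⟩ := hsurj x
    rw [zpow_apply_of_apply_eq_sub_one hη, one_apply, hf, sub_sub_cancel_left, dvd_neg]
    exact h

theorem exists_mem_zpowers_apply_eq_of_apply_eq_sub_one (hsurj : Function.Surjective f)
    (hη : ∀ i, η (f i) = f (i - 1)) (x y : X) : ∃ n ∈ zpowers η, n x = y := by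
  obtain ⟨i, rfl⟩ := hsurj x
  obtain ⟨j, rfl⟩ := hsurj y
  exact ⟨η ^ (i - j), zpow_mem_zpowers η _, by
    rw [zpow_apply_of_apply_eq_sub_one hη, sub_sub_cancel]⟩

theorem eq_one_of_mem_zpowers_of_apply_eq_sub_one (hf : ∀ i j, f i = f j ↔ (p : ℤ) ∣ i - j)
    (hsurj : Function.Surjective f) (hη : ∀ i, η (f i) = f (i - 1)) {n : Perm X}
    (hn : n ∈ zpowers η) {x : X} (hx : n x = x) : n = 1 := by
  obtain ⟨m, rfl⟩ := mem_zpowers_iff.mp hn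
  obtain ⟨i, rfl⟩ := hsurj x
  rw [zpow_apply_of_apply_eq_sub_one hη, hf, sub_sub_cancel_left, dvd_neg] at hx
  exact (zpow_eq_one_iff_of_apply_eq_sub_one hf hsurj hη m).mpr hx

end Equiv.Perm

open Equiv.Perm in
theorem eta_generates_regular_subgroup_normalized_by_translations_general
    (p : ℕ) (hp : p.Prime) (d : ℕ)
    (G : Type*) [Group G] (σ τ : G)
    (hσ : orderOf σ = p) (hτ : orderOf τ = p - 1)
    (hrel : τ * σ * τ⁻¹ = σ ^ d) (hgen : Subgroup.closure {σ, τ} = ⊤)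
    (η : Equiv.Perm (G ⧸ Subgroup.zpowers τ))
    (hη : ∀ i : ℤ, η (↑(σ ^ i) : G ⧸ Subgroup.zpowers τ) =
      (↑(σ ^ (i - 1)) : G ⧸ Subgroup.zpowers τ)) :
    (MulAction.toPermHom G (G ⧸ Subgroup.zpowers τ) σ) * η *
        (MulAction.toPermHom G (G ⧸ Subgroup.zpowers τ) σ)⁻¹ = η ∧
    (MulAction.toPermHom G (G ⧸ Subgroup.zpowers τ) τ) * η *
        (MulAction.toPermHom G (G ⧸ Subgroup.zpowers τ) τ)⁻¹ = η ^ d ∧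
    -- `N = ⟨η⟩` has order `p` ……
    Nat.card (Subgroup.zpowers η) = p ∧
    -- …… it is normalized by `λ(G)` ……
    (∀ g : G, ∀ n ∈ Subgroup.zpowers η,
      (MulAction.toPermHom G (G ⧸ Subgroup.zpowers τ) g) * n *
        (MulAction.toPermHom G (G ⧸ Subgroup.zpowers τ) g)⁻¹ ∈ Subgroup.zpowers η) ∧
    -- …… it acts transitively on `X` ……
    (∀ x y : G ⧸ Subgroup.zpowers τ, ∃ n ∈ Subgroup.zpowers η, n x = y) ∧
    -- …… and only its identity element has a fixed point.
    (∀ n ∈ Subgroup.zpowers η, (∃ x : G ⧸ Subgroup.zpowers τ, n x = x) → n = 1) := by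
  set lam := MulAction.toPermHom G (G ⧸ zpowers τ)
  set f : ℤ → G ⧸ zpowers τ := fun i => ((σ ^ i : G) : G ⧸ zpowers τ)
  have hf : ∀ i j, f i = f j ↔ (p : ℤ) ∣ i - j := zpow_coe_quotient_zpowers_eq_iff hp.ne_zero hσ hτ
  have hsurj : Function.Surjective f :=
    surjective_zpow_coe_quotient_zpowers (orderOf_pos_iff.mp (hσ ▸ hp.pos)) hrel hgen
  have hηf : ∀ i, η (f i) = f (i - 1) := hη
  have hσf : ∀ i, lam σ (f i) = f (i + 1) := fun i =>
    show ((σ * σ ^ i : G) : G ⧸ zpowers τ) = f (i + 1) by rw [← zpow_one_add, add_comm]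
  have hτf : ∀ i, lam τ (f i) = f (d * i) := QuotientGroup.coe_mul_zpow_of_conj_eq hrel
  have hση : lam σ * η = η * lam σ := by
    ext x
    obtain ⟨i, rfl⟩ := hsurj x
    rw [mul_apply, mul_apply, hηf, hσf, hσf, hηf, sub_add_cancel, add_sub_cancel_right]
  have hτη : lam τ * η = η ^ d * lam τ := by
    ext x
    obtain ⟨i, rfl⟩ := hsurj x
    rw [mul_apply, mul_apply, hηf, hτf, hτf, ← zpow_natCast, zpow_apply_of_apply_eq_sub_one hη,
      mul_sub_one]
  have horder : orderOf η = p :=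
    orderOf_eq_of_zpow_eq_one_iff (zpow_eq_one_iff_of_apply_eq_sub_one hf hsurj hη)
  have hnorm : closure {σ, τ} ≤ (normalizer (zpowers η : Set _)).comap lam := by
    have hηfin : IsOfFinOrder η := orderOf_pos_iff.mp (horder ▸ hp.pos)
    rw [closure_le]
    rintro x (rfl | rfl)
    · exact mem_normalizer_zpowers_of_conj_mem hηfin ⟨1, by simp [mul_inv_eq_of_eq_mul hση]⟩
    · exact mem_normalizer_zpowers_of_conj_mem hηfin ⟨d, by simp [mul_inv_eq_of_eq_mul hτη]⟩
  refine ⟨mul_inv_eq_of_eq_mul hση, mul_inv_eq_of_eq_mul hτη, by rw [Nat.card_zpowers, horder],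
    fun g n hn => (mem_normalizer_iff.mp (hnorm (hgen ▸ mem_top g)) n).mp hn,
    exists_mem_zpowers_apply_eq_of_apply_eq_sub_one hsurj hη,
    fun n hn ⟨x, hx⟩ => eq_one_of_mem_zpowers_of_apply_eq_sub_one hf hsurj hη hn hx⟩

/-- Let `η ∈ Perm(X)` be defined by `η(σ^i G') = σ^(i-1) G'`, and let
`λ : G → Perm(X)` be the left-translation map.  Then `λ(σ) η λ(σ)⁻¹ = η` and
`λ(τ) η λ(τ)⁻¹ = η^d`; consequently `N = ⟨η⟩` is a regular subgroup of `Perm(X)` of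
order `p` normalized by `λ(G)`. -/
theorem eta_generates_regular_subgroup_normalized_by_translations
    (p : ℕ) (hp : p.Prime) (d : ℕ) (hd : IsPrimitiveRoot (d : ZMod p) (p - 1))
    (G : Type*) [Group G] (σ τ : G)
    (hσ : orderOf σ = p) (hτ : orderOf τ = p - 1)
    (hrel : τ * σ * τ⁻¹ = σ ^ d) (hgen : Subgroup.closure {σ, τ} = ⊤)
    (η : Equiv.Perm (G ⧸ Subgroup.zpowers τ))
    (hη : ∀ i : ℤ, η (↑(σ ^ i) : G ⧸ Subgroup.zpowers τ) =
      (↑(σ ^ (i - 1)) : G ⧸ Subgroup.zpowers τ)) :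
    (MulAction.toPermHom G (G ⧸ Subgroup.zpowers τ) σ) * η *
        (MulAction.toPermHom G (G ⧸ Subgroup.zpowers τ) σ)⁻¹ = η ∧
    (MulAction.toPermHom G (G ⧸ Subgroup.zpowers τ) τ) * η *
        (MulAction.toPermHom G (G ⧸ Subgroup.zpowers τ) τ)⁻¹ = η ^ d ∧
    -- `N = ⟨η⟩` has order `p` ……
    Nat.card (Subgroup.zpowers η) = p ∧
    -- …… it is normalized by `λ(G)` ……
    (∀ g : G, ∀ n ∈ Subgroup.zpowers η,
      (MulAction.toPermHom G (G ⧸ Subgroup.zpowers τ) g) * n *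
        (MulAction.toPermHom G (G ⧸ Subgroup.zpowers τ) g)⁻¹ ∈ Subgroup.zpowers η) ∧
    -- …… it acts transitively on `X` ……
    (∀ x y : G ⧸ Subgroup.zpowers τ, ∃ n ∈ Subgroup.zpowers η, n x = y) ∧
    -- …… and only its identity element has a fixed point.
    (∀ n ∈ Subgroup.zpowers η, (∃ x : G ⧸ Subgroup.zpowers τ, n x = x) → n = 1) :=
  eta_generates_regular_subgroup_normalized_by_translations_general p hp d G σ τ hσ hτ hrel hgen η
    hη
end
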